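/- Let G be a (claw, co-claw)-free graph. If G contains an induced 3-sun, then G is itself isomorphic to the 3-sun. -/
import Mathlib


open SimpleGraph

/-- `H` occurs as an induced subgraph of `G`. -/
def HasInducedCopy {V W : Type*} (G : SimpleGraph V) (H : SimpleGraph W) : Prop :=
  ∃ f : W ↪ V, ∀ a b, H.Adj a b ↔ G.Adj (f a) (f b)

/-- The graph on `Fin n` with the given edge list. -/
def listGraph (n : ℕ) (l : List (Fin n × Fin n)) : SimpleGraph (Fin n) :=
  SimpleGraph.fromRel (fun a b => (a, b) ∈ l)

/-- The claw `K_{1,3}`. -/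
def clawGraph : SimpleGraph (Fin 4) := listGraph 4 [(0,1),(0,2),(0,3)]

/-- The co-claw: the complement of the claw (a triangle plus an isolated vertex). -/
def coclawGraph : SimpleGraph (Fin 4) := clawGraphᶜ

/-- The net: a triangle `0,1,2` with pendant vertices `3,4,5`, where `3+i` is
adjacent exactly to `i`. -/
def netGraph : SimpleGraph (Fin 6) := listGraph 6 [(0,1),(0,2),(1,2),(0,3),(1,4),(2,5)]

/-- The 3-sun: the complement of the net. -/
def sunGraph : SimpleGraph (Fin 6) := netGraphᶜ

/-- The bull: a triangle `0,1,2` with pendant vertices `3` (adjacent to `0`)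
and `4` (adjacent to `1`). -/
def bullGraph : SimpleGraph (Fin 5) := listGraph 5 [(0,1),(0,2),(1,2),(0,3),(1,4)]

/-- `{a, b, c}` is an asteroidal triple of `G`: an independent set of three
vertices such that any two of them are joined by a path avoiding the closed
neighbourhood of the third. -/
def IsAT {V : Type*} (G : SimpleGraph V) (a b c : V) : Prop :=
  a ≠ b ∧ a ≠ c ∧ b ≠ c ∧ ¬G.Adj a b ∧ ¬G.Adj a c ∧ ¬G.Adj b c ∧
  (∃ p : G.Walk a b, ∀ x ∈ p.support, x ≠ c ∧ ¬G.Adj c x) ∧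
  (∃ p : G.Walk a c, ∀ x ∈ p.support, x ≠ b ∧ ¬G.Adj b x) ∧
  (∃ p : G.Walk b c, ∀ x ∈ p.support, x ≠ a ∧ ¬G.Adj a x)

/-- A graph is AT-free if it contains no asteroidal triple. -/
def ATFree {V : Type*} (G : SimpleGraph V) : Prop := ∀ a b c : V, ¬ IsAT G a b c

/-- A unit interval graph: vertices are unit intervals `[f v, f v + 1]` on the
real line, and distinct vertices are adjacent iff their intervals intersect. -/
def IsUnitIntervalGraph {V : Type*} (G : SimpleGraph V) : Prop :=
  ∃ f : V → ℝ, ∀ u v : V, G.Adj u v ↔ u ≠ v ∧ |f u - f v| ≤ 1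

section Aux

instance (n : ℕ) (l : List (Fin n × Fin n)) : DecidableRel (listGraph n l).Adj :=
  fun a b => decidable_of_iff _ (SimpleGraph.fromRel_adj _ a b).symm
instance : DecidableRel clawGraph.Adj := by unfold clawGraph; infer_instance
instance : DecidableRel netGraph.Adj := by unfold netGraph; infer_instance
instance : DecidableRel sunGraph.Adj := by unfold sunGraph; infer_instance
instance : DecidableRel coclawGraph.Adj := by unfold coclawGraph; infer_instance

/-- The sun extended by a seventh vertex whose neighbourhood in the sun is `N`. -/
def extRel (N : Fin 6 → Bool) (a b : Fin 7) : Prop :=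
  if ha : a.1 < 6 then
    if hb : b.1 < 6 then sunGraph.Adj ⟨a.1, ha⟩ ⟨b.1, hb⟩
    else N ⟨a.1, ha⟩ = true
  else if hb : b.1 < 6 then N ⟨b.1, hb⟩ = true else False

instance (N : Fin 6 → Bool) : DecidableRel (extRel N) := fun a b => by
  unfold extRel; infer_instance

def sunExt (N : Fin 6 → Bool) : SimpleGraph (Fin 7) := SimpleGraph.fromRel (extRel N)

instance (N : Fin 6 → Bool) : DecidableRel (sunExt N).Adj :=
  fun a b => decidable_of_iff _ (SimpleGraph.fromRel_adj _ a b).symm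

set_option maxRecDepth 10000 in
lemma key (N : Fin 6 → Bool) :
    (∃ f : Fin 4 → Fin 7, Function.Injective f ∧
      ∀ a b, clawGraph.Adj a b ↔ (sunExt N).Adj (f a) (f b)) ∨
    (∃ f : Fin 4 → Fin 7, Function.Injective f ∧
      ∀ a b, coclawGraph.Adj a b ↔ (sunExt N).Adj (f a) (f b)) := by
  rw [show N = ![N 0, N 1, N 2, N 3, N 4, N 5] from by funext i; fin_cases i <;> rfl]
  cases h0 : N 0 <;> cases h1 : N 1 <;> cases h2 : N 2 <;> cases h3 : N 3 <;> cases h4 : N 4 <;> cases h5 : N 5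
  · exact Or.inr ⟨![6,0,4,5], by decide⟩
  · exact Or.inl ⟨![5,0,1,6], by decide⟩
  · exact Or.inl ⟨![4,0,2,6], by decide⟩
  · exact Or.inl ⟨![4,0,2,6], by decide⟩
  · exact Or.inl ⟨![3,1,2,6], by decide⟩
  · exact Or.inl ⟨![3,1,2,6], by decide⟩
  · exact Or.inl ⟨![3,1,2,6], by decide⟩
  · exact Or.inl ⟨![3,1,2,6], by decide⟩
  · exact Or.inr ⟨![6,0,4,5], by decide⟩
  · exact Or.inl ⟨![5,0,1,6], by decide⟩
  · exact Or.inr ⟨![1,2,4,6], by decide⟩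
  · exact Or.inr ⟨![1,2,4,6], by decide⟩
  · exact Or.inr ⟨![0,2,3,6], by decide⟩
  · exact Or.inr ⟨![0,2,3,6], by decide⟩
  · exact Or.inr ⟨![0,2,3,6], by decide⟩
  · exact Or.inr ⟨![0,2,3,6], by decide⟩
  · exact Or.inr ⟨![6,0,4,5], by decide⟩
  · exact Or.inr ⟨![2,1,5,6], by decide⟩
  · exact Or.inl ⟨![4,0,2,6], by decide⟩
  · exact Or.inr ⟨![2,1,5,6], by decide⟩
  · exact Or.inr ⟨![0,1,3,6], by decide⟩
  · exact Or.inr ⟨![0,1,3,6], by decide⟩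
  · exact Or.inr ⟨![0,1,3,6], by decide⟩
  · exact Or.inr ⟨![0,1,3,6], by decide⟩
  · exact Or.inr ⟨![6,0,4,5], by decide⟩
  · exact Or.inl ⟨![5,0,3,6], by decide⟩
  · exact Or.inl ⟨![4,0,3,6], by decide⟩
  · exact Or.inl ⟨![4,0,3,6], by decide⟩
  · exact Or.inr ⟨![0,1,3,6], by decide⟩
  · exact Or.inr ⟨![0,1,3,6], by decide⟩
  · exact Or.inr ⟨![0,1,3,6], by decide⟩
  · exact Or.inr ⟨![0,1,3,6], by decide⟩
  · exact Or.inr ⟨![6,1,3,5], by decide⟩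
  · exact Or.inr ⟨![2,0,5,6], by decide⟩
  · exact Or.inr ⟨![1,0,4,6], by decide⟩
  · exact Or.inr ⟨![1,0,4,6], by decide⟩
  · exact Or.inl ⟨![3,1,2,6], by decide⟩
  · exact Or.inr ⟨![2,0,5,6], by decide⟩
  · exact Or.inr ⟨![1,0,4,6], by decide⟩
  · exact Or.inr ⟨![1,0,4,6], by decide⟩
  · exact Or.inr ⟨![6,1,3,5], by decide⟩
  · exact Or.inl ⟨![5,1,4,6], by decide⟩
  · exact Or.inr ⟨![1,0,4,6], by decide⟩
  · exact Or.inr ⟨![1,0,4,6], by decide⟩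
  · exact Or.inl ⟨![3,1,4,6], by decide⟩
  · exact Or.inl ⟨![3,1,4,6], by decide⟩
  · exact Or.inr ⟨![1,0,4,6], by decide⟩
  · exact Or.inr ⟨![1,0,4,6], by decide⟩
  · exact Or.inr ⟨![6,2,3,4], by decide⟩
  · exact Or.inr ⟨![2,0,5,6], by decide⟩
  · exact Or.inl ⟨![4,2,5,6], by decide⟩
  · exact Or.inr ⟨![2,0,5,6], by decide⟩
  · exact Or.inl ⟨![3,2,5,6], by decide⟩
  · exact Or.inr ⟨![2,0,5,6], by decide⟩
  · exact Or.inl ⟨![3,2,5,6], by decide⟩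
  · exact Or.inr ⟨![2,0,5,6], by decide⟩
  · exact Or.inl ⟨![6,0,1,2], by decide⟩
  · exact Or.inl ⟨![6,0,1,2], by decide⟩
  · exact Or.inl ⟨![6,0,1,2], by decide⟩
  · exact Or.inl ⟨![6,0,1,2], by decide⟩
  · exact Or.inl ⟨![6,0,1,2], by decide⟩
  · exact Or.inl ⟨![6,0,1,2], by decide⟩
  · exact Or.inl ⟨![6,0,1,2], by decide⟩
  · exact Or.inl ⟨![6,0,1,2], by decide⟩

end Aux

/-- A (claw, co-claw)-free graph containing an induced 3-sun is itself
isomorphic to the 3-sun. -/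
theorem claw_coclaw_sun_is_sun {V : Type*} (G : SimpleGraph V)
    (hclaw : ¬ HasInducedCopy G clawGraph)
    (hcoclaw : ¬ HasInducedCopy G coclawGraph)
    (hsun : HasInducedCopy G sunGraph) :
    Nonempty (G ≃g sunGraph) := by
  classical
  obtain ⟨f, hf⟩ := hsun
  have hsurj : Function.Surjective f := by
    intro v
    by_contra hv
    push_neg at hv
    set N : Fin 6 → Bool := fun i => decide (G.Adj v (f i)) with hN
    set g : Fin 7 → V := fun i => if h : i.1 < 6 then f ⟨i.1, h⟩ else v with hg
    have hginj : Function.Injective g := by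
      intro a b hab
      simp only [hg] at hab
      by_cases ha : a.1 < 6 <;> by_cases hb : b.1 < 6
      · rw [dif_pos ha, dif_pos hb] at hab
        have h2 := f.injective hab
        have h3 : ((⟨a.1, ha⟩ : Fin 6) : ℕ) = ((⟨b.1, hb⟩ : Fin 6) : ℕ) := congrArg Fin.val h2
        exact Fin.ext h3
      · rw [dif_pos ha, dif_neg hb] at hab
        exact absurd hab (hv _)
      · rw [dif_neg ha, dif_pos hb] at hab
        exact absurd hab.symm (hv _)
      · exact Fin.ext (by omega)
    have hgadj : ∀ a b : Fin 7, (sunExt N).Adj a b ↔ G.Adj (g a) (g b) := by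
      intro a b
      rw [sunExt, SimpleGraph.fromRel_adj]
      by_cases ha : a.1 < 6 <;> by_cases hb : b.1 < 6
      · simp only [extRel, dif_pos ha, dif_pos hb, hg]
        rw [← hf]
        constructor
        · rintro ⟨-, h | h⟩
          · exact h
          · exact h.symm
        · intro h
          exact ⟨fun hab => h.ne (by subst hab; rfl), Or.inl h⟩
      · have hne : a ≠ b := fun h => hb (h ▸ ha)
        simp only [extRel, dif_pos ha, dif_neg hb, hg, hN, decide_eq_true_eq, or_self]
        rw [G.adj_comm]
        exact ⟨fun h => h.2, fun h => ⟨hne, h⟩⟩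
      · have hne : a ≠ b := fun h => ha (h ▸ hb)
        simp only [extRel, dif_pos hb, dif_neg ha, hg, hN, decide_eq_true_eq, or_self]
        exact ⟨fun h => h.2, fun h => ⟨hne, h⟩⟩
      · have hab : a = b := Fin.ext (by omega)
        subst hab
        simp only [extRel, dif_neg ha, hg]
        simp [G.irrefl]
    rcases key N with ⟨w, hw1, hw2⟩ | ⟨w, hw1, hw2⟩
    · exact hclaw ⟨⟨g ∘ w, hginj.comp hw1⟩, fun a b => (hw2 a b).trans (hgadj _ _)⟩
    · exact hcoclaw ⟨⟨g ∘ w, hginj.comp hw1⟩, fun a b => (hw2 a b).trans (hgadj _ _)⟩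
  let e : Fin 6 ≃ V := Equiv.ofBijective f ⟨f.injective, hsurj⟩
  have key2 : ∀ x, f (e.symm x) = x := fun x => e.apply_symm_apply x
  refine ⟨{ toEquiv := e.symm, map_rel_iff' := ?_ }⟩
  intro a b
  show sunGraph.Adj (e.symm a) (e.symm b) ↔ G.Adj a b
  rw [hf (e.symm a) (e.symm b), key2, key2]
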